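/- arXiv:0908.3760 — 3 statements merged into one kernel-verified Lean document; each statement's English description precedes it below -/
import Mathlib

section
/- (Classification Table, case f = xΦ(u/x): admitted additional symmetry x∂_x + y∂_y + t∂_t + u∂_u.) Let Φ : ℝ → ℝ be any function and let u : ℝ³ → ℝ be C² and satisfy ∂u/∂t = x·Φ(u/x)·(u_{xx}+u_{yy}) at every point (x,y,t) with x ≠ 0. Then for every s ∈ ℝ, the function v(x,y,t) = e^s·u(e^{−s}x, e^{−s}y, e^{−s}t) also satisfies ∂v/∂t = x·Φ(v/x)·(v_{xx}+v_{yy}) at every point (x,y,t) with x ≠ 0. -/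
/-- ∂u/∂x at (x,y,t) for u : ℝ³ → ℝ with argument order (x,y,t). -/
noncomputable def px (u : ℝ × ℝ × ℝ → ℝ) (x y t : ℝ) : ℝ :=
  deriv (fun a => u (a, y, t)) x

/-- ∂u/∂y at (x,y,t). -/
noncomputable def py (u : ℝ × ℝ × ℝ → ℝ) (x y t : ℝ) : ℝ :=
  deriv (fun a => u (x, a, t)) y

/-- ∂u/∂t at (x,y,t). -/
noncomputable def pt (u : ℝ × ℝ × ℝ → ℝ) (x y t : ℝ) : ℝ :=
  deriv (fun a => u (x, y, a)) t

/-- ∂²u/∂x² at (x,y,t). -/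
noncomputable def pxx (u : ℝ × ℝ × ℝ → ℝ) (x y t : ℝ) : ℝ :=
  deriv (fun a => px u a y t) x

/-- ∂²u/∂y² at (x,y,t). -/
noncomputable def pyy (u : ℝ × ℝ × ℝ → ℝ) (x y t : ℝ) : ℝ :=
  deriv (fun a => py u x a t) y

/-- u satisfies the 2D nonlinear heat equation
    u_t = f(x,y,u,u_x,u_y)·(u_xx + u_yy) everywhere on ℝ³. -/
def IsHeatSol (f : ℝ → ℝ → ℝ → ℝ → ℝ → ℝ) (u : ℝ × ℝ × ℝ → ℝ) : Prop :=
  ∀ x y t : ℝ,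
    pt u x y t =
      f x y (u (x, y, t)) (px u x y t) (py u x y t) *
        (pxx u x y t + pyy u x y t)

/-! Every partial derivative of `v = E · u(c ·)` is that of `u` at `c p`, times `E` and one
factor `c` per differentiation. Hence `v_t = E c · u_t` and `x (v_xx + v_yy) = E c · (c x)(u_xx + u_yy)`,
so both sides of the equation scale by `E c`, while the argument of `Φ` is invariant,
`v / x = u(c p) / (c x)`, exactly when `E c = 1`. -/

def rescale (E c : ℝ) (u : ℝ × ℝ × ℝ → ℝ) : ℝ × ℝ × ℝ → ℝ :=
  fun p => E * u (c * p.1, c * p.2.1, c * p.2.2)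

theorem deriv_const_mul_comp_mul (E c : ℝ) (f : ℝ → ℝ) (a : ℝ) :
    deriv (fun r => E * f (c * r)) a = E * c * deriv f (c * a) := by
  rw [deriv_const_mul_field, deriv_comp_mul_left c f a, smul_eq_mul, mul_assoc]

section Rescale

variable (E c : ℝ) (u : ℝ × ℝ × ℝ → ℝ) (x y t : ℝ)

theorem pt_rescale : pt (rescale E c u) x y t = E * c * pt u (c * x) (c * y) (c * t) :=
  deriv_const_mul_comp_mul E c (fun r => u (c * x, c * y, r)) t

theorem px_rescale : px (rescale E c u) x y t = E * c * px u (c * x) (c * y) (c * t) :=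
  deriv_const_mul_comp_mul E c (fun r => u (r, c * y, c * t)) x

theorem py_rescale : py (rescale E c u) x y t = E * c * py u (c * x) (c * y) (c * t) :=
  deriv_const_mul_comp_mul E c (fun r => u (c * x, r, c * t)) y

theorem pxx_rescale :
    pxx (rescale E c u) x y t = E * c ^ 2 * pxx u (c * x) (c * y) (c * t) := by
  simp only [pxx, px_rescale]
  exact (deriv_const_mul_comp_mul (E * c) c (fun r => px u r (c * y) (c * t)) x).trans (by ring)

theorem pyy_rescale :
    pyy (rescale E c u) x y t = E * c ^ 2 * pyy u (c * x) (c * y) (c * t) := by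
  simp only [pyy, py_rescale]
  exact (deriv_const_mul_comp_mul (E * c) c (fun r => py u (c * x) r (c * t)) y).trans (by ring)

end Rescale

theorem scaling_symmetry_xPhi_general
    (Φ : ℝ → ℝ) (u : ℝ × ℝ × ℝ → ℝ)
    (hsol : ∀ x y t : ℝ, x ≠ 0 →
      pt u x y t = x * Φ (u (x, y, t) / x) * (pxx u x y t + pyy u x y t))
    (s : ℝ) :
    ∀ x y t : ℝ, x ≠ 0 →
      pt (fun p => Real.exp s *
            u (Real.exp (-s) * p.1, Real.exp (-s) * p.2.1, Real.exp (-s) * p.2.2)) x y t =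
        x * Φ ((Real.exp s *
            u (Real.exp (-s) * x, Real.exp (-s) * y, Real.exp (-s) * t)) / x) *
          (pxx (fun p => Real.exp s *
              u (Real.exp (-s) * p.1, Real.exp (-s) * p.2.1, Real.exp (-s) * p.2.2)) x y t +
           pyy (fun p => Real.exp s *
              u (Real.exp (-s) * p.1, Real.exp (-s) * p.2.1, Real.exp (-s) * p.2.2)) x y t) := by
  intro x y t hx
  set E := Real.exp s
  set c := Real.exp (-s)
  have hEc : E * c = 1 := by rw [← Real.exp_add, add_neg_cancel, Real.exp_zero]
  have hc : c ≠ 0 := Real.exp_ne_zero _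
  have harg : u (c * x, c * y, c * t) / (c * x) = E * u (c * x, c * y, c * t) / x := by
    field_simp
    linear_combination -u (c * x, c * y, c * t) * hEc
  change pt (rescale E c u) x y t = x * Φ (E * u (c * x, c * y, c * t) / x) *
    (pxx (rescale E c u) x y t + pyy (rescale E c u) x y t)
  rw [pt_rescale, pxx_rescale, pyy_rescale, hsol _ _ _ (mul_ne_zero hc hx), harg]
  ring

/-- Classification table, case f = x·Φ(u/x): the equation admits the additional
    scaling symmetry x∂ₓ + y∂_y + t∂_t + u∂_u. -/
theorem scaling_symmetry_xPhi
    (Φ : ℝ → ℝ) (u : ℝ × ℝ × ℝ → ℝ) (hu : ContDiff ℝ 2 u)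
    (hsol : ∀ x y t : ℝ, x ≠ 0 →
      pt u x y t = x * Φ (u (x, y, t) / x) * (pxx u x y t + pyy u x y t))
    (s : ℝ) :
    ∀ x y t : ℝ, x ≠ 0 →
      pt (fun p => Real.exp s *
            u (Real.exp (-s) * p.1, Real.exp (-s) * p.2.1, Real.exp (-s) * p.2.2)) x y t =
        x * Φ ((Real.exp s *
            u (Real.exp (-s) * x, Real.exp (-s) * y, Real.exp (-s) * t)) / x) *
          (pxx (fun p => Real.exp s *
              u (Real.exp (-s) * p.1, Real.exp (-s) * p.2.1, Real.exp (-s) * p.2.2)) x y t +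
           pyy (fun p => Real.exp s *
              u (Real.exp (-s) * p.1, Real.exp (-s) * p.2.1, Real.exp (-s) * p.2.2)) x y t) :=
  scaling_symmetry_xPhi_general Φ u hsol s
end

section
/- (Classification Table, case f = Φ(u+y): admitted additional symmetry −∂_y + ∂_u.) Let Φ : ℝ → ℝ be any function and let u : ℝ³ → ℝ be C² and satisfy ∂u/∂t = Φ(u+y)·(u_{xx}+u_{yy}) at every point of ℝ³. Then for every s ∈ ℝ, the function v(x,y,t) = u(x, y+s, t) + s also satisfies ∂v/∂t = Φ(v+y)·(v_{xx}+v_{yy}) at every point of ℝ³. -/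
/-- Classification table, case f = Φ(u+y): the equation admits the additional
    symmetry −∂_y + ∂_u. -/
theorem symmetry_Phi_u_plus_y
    (Φ : ℝ → ℝ) (u : ℝ × ℝ × ℝ → ℝ) (hu : ContDiff ℝ 2 u)
    (hsol : IsHeatSol (fun _ y w _ _ => Φ (w + y)) u) (s : ℝ) :
    IsHeatSol (fun _ y w _ _ => Φ (w + y)) (fun p => u (p.1, p.2.1 + s, p.2.2) + s) := by
  intro x y t
  have hpx : ∀ a b c : ℝ, px (fun p : ℝ × ℝ × ℝ => u (p.1, p.2.1 + s, p.2.2) + s) a b c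
      = px u a (b + s) c := by
    intro a b c
    unfold px
    simp
  have hpy : ∀ a b c : ℝ, py (fun p : ℝ × ℝ × ℝ => u (p.1, p.2.1 + s, p.2.2) + s) a b c
      = py u a (b + s) c := by
    intro a b c
    unfold py
    have h := deriv_comp_add_const (fun e => u (a, e, c) + s) s b
    simp only [deriv_add_const] at h
    simpa using h
  have hpt : pt (fun p : ℝ × ℝ × ℝ => u (p.1, p.2.1 + s, p.2.2) + s) x y t
      = pt u x (y + s) t := by
    unfold pt
    simp
  have hpxx : pxx (fun p : ℝ × ℝ × ℝ => u (p.1, p.2.1 + s, p.2.2) + s) x y t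
      = pxx u x (y + s) t := by
    unfold pxx
    simp only [hpx]
  have hpyy : pyy (fun p : ℝ × ℝ × ℝ => u (p.1, p.2.1 + s, p.2.2) + s) x y t
      = pyy u x (y + s) t := by
    unfold pyy
    simp only [hpy]
    exact deriv_comp_add_const (fun b => py u x b t) s y

  have := hsol x (y + s) t
  simp only [hpx, hpy, hpt, hpxx, hpyy]
  rw [this]
  ring_nf
end

section
/- (Classification Table, case f = Φ(u−y): admitted additional symmetry −∂_y − ∂_u.) Let Φ : ℝ → ℝ be any function and let u : ℝ³ → ℝ be C² and satisfy ∂u/∂t = Φ(u−y)·(u_{xx}+u_{yy}) at every point of ℝ³. Then for every s ∈ ℝ, the function v(x,y,t) = u(x, y+s, t) − s also satisfies ∂v/∂t = Φ(v−y)·(v_{xx}+v_{yy}) at every point of ℝ³. -/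
/-! Partial derivatives commute with the translation `y ↦ y + s` and ignore an additive constant,
so a translated-and-lowered solution solves the equation whose coefficient is translated accordingly.
For the coefficient `Φ (u - y)`, lowering `u` by the same `s` that `y` is translated by leaves it
unchanged. -/

section ShiftY

variable (u : ℝ × ℝ × ℝ → ℝ) (s c x y t : ℝ)

theorem px_shiftY_sub_const :
    px (fun p => u (p.1, p.2.1 + s, p.2.2) - c) x y t = px u x (y + s) t :=
  deriv_sub_const c

theorem py_shiftY_sub_const :
    py (fun p => u (p.1, p.2.1 + s, p.2.2) - c) x y t = py u x (y + s) t := by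
  rw [py, deriv_sub_const]
  exact deriv_comp_add_const (fun b => u (x, b, t)) s y

theorem pt_shiftY_sub_const :
    pt (fun p => u (p.1, p.2.1 + s, p.2.2) - c) x y t = pt u x (y + s) t :=
  deriv_sub_const c

theorem pxx_shiftY_sub_const :
    pxx (fun p => u (p.1, p.2.1 + s, p.2.2) - c) x y t = pxx u x (y + s) t := by
  simp only [pxx, px_shiftY_sub_const]

theorem pyy_shiftY_sub_const :
    pyy (fun p => u (p.1, p.2.1 + s, p.2.2) - c) x y t = pyy u x (y + s) t := by
  simp only [pyy, py_shiftY_sub_const]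
  exact deriv_comp_add_const (fun b => py u x b t) s y

end ShiftY

theorem IsHeatSol.shiftY_sub_const {f : ℝ → ℝ → ℝ → ℝ → ℝ → ℝ} {u : ℝ × ℝ × ℝ → ℝ}
    (hsol : IsHeatSol f u) (s c : ℝ) :
    IsHeatSol (fun x y w p q => f x (y + s) (w + c) p q)
      (fun p => u (p.1, p.2.1 + s, p.2.2) - c) := by
  intro x y t
  simpa [px_shiftY_sub_const, py_shiftY_sub_const, pt_shiftY_sub_const,
    pxx_shiftY_sub_const, pyy_shiftY_sub_const] using hsol x (y + s) t

theorem symmetry_Phi_u_minus_y_general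
    (Φ : ℝ → ℝ) (u : ℝ × ℝ × ℝ → ℝ)
    (hsol : IsHeatSol (fun _ y w _ _ => Φ (w - y)) u) (s : ℝ) :
    IsHeatSol (fun _ y w _ _ => Φ (w - y)) (fun p => u (p.1, p.2.1 + s, p.2.2) - s) := by
  simpa using hsol.shiftY_sub_const s s

/-- Classification table, case f = Φ(u−y): the equation admits the additional
    symmetry −∂_y − ∂_u. -/
theorem symmetry_Phi_u_minus_y
    (Φ : ℝ → ℝ) (u : ℝ × ℝ × ℝ → ℝ) (hu : ContDiff ℝ 2 u)
    (hsol : IsHeatSol (fun _ y w _ _ => Φ (w - y)) u) (s : ℝ) :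
    IsHeatSol (fun _ y w _ _ => Φ (w - y)) (fun p => u (p.1, p.2.1 + s, p.2.2) - s) :=
  symmetry_Phi_u_minus_y_general Φ u hsol s
end
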